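/- For every pair of odd integers k_0 and k with 3 ≤ k_0 ≤ k and every positive real δ > 0, there exists an integer m and reals ω_1, …, ω_m such that Σ_{i∈[m]} ω_i^ℓ = 0 for every odd integer ℓ ≠ k_0 with 3 ≤ ℓ ≤ k, Σ_{i∈[m]} ω_i^{k_0} = 1, and Σ_{i∈[m]} ω_i^{k+1} ≤ δ. -/

import Mathlib

open MeasureTheory

/-- A kernel: a bounded measurable symmetric real function (its values on `[0,1]²` are the
relevant ones). -/
structure Kernel : Type where
  toFun : ℝ → ℝ → ℝ
  symm : ∀ x y, toFun x y = toFun y x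
  measurable : Measurable (Function.uncurry toFun)
  bounded : ∃ C : ℝ, ∀ x y, |toFun x y| ≤ C

/-- A kernel is nonzero if it is not a.e. zero on `[0,1]²`. -/
def Kernel.Nonzero (U : Kernel) : Prop :=
  ¬ (∀ᵐ p : ℝ × ℝ ∂(volume.restrict ((Set.Icc (0:ℝ) 1) ×ˢ (Set.Icc (0:ℝ) 1))),
      U.toFun p.1 p.2 = 0)

/-- A kernel is balanced if its marginals vanish a.e. -/
def Kernel.Balanced (U : Kernel) : Prop :=
  ∀ᵐ x ∂(volume.restrict (Set.Icc (0:ℝ) 1)), (∫ y in Set.Icc (0:ℝ) 1, U.toFun x y) = 0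

/-- The product of the kernel values over the edges of a graph. -/
noncomputable def edgeProd {V : Type} (H : SimpleGraph V) (U : Kernel) (x : V → ℝ) : ℝ :=
  ∏ᶠ e ∈ H.edgeSet, Sym2.lift ⟨fun u v => U.toFun (x u) (x v), fun u v => U.symm (x u) (x v)⟩ e

/-- The homomorphism density `t(H, U)` of a finite simple graph in a kernel. -/
noncomputable def homDensity {V : Type} [Fintype V] (H : SimpleGraph V) (U : Kernel) : ℝ :=
  ∫ x in (Set.univ.pi fun _ : V => Set.Icc (0:ℝ) 1), edgeProd H U x

open Classical in
/-- The rooted homomorphism density `t^H_U(z)` of a graph `H` rooted at `w`. -/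
noncomputable def rootedDensity {V : Type} [Fintype V] (H : SimpleGraph V) (w : V)
    (U : Kernel) (z : ℝ) : ℝ :=
  ∫ x in (Set.univ.pi fun _ : {v : V // v ≠ w} => Set.Icc (0:ℝ) 1),
    edgeProd H U (fun v => if h : v = w then z else x ⟨v, h⟩)

/-- A bundled finite simple graph. -/
structure FinGraph : Type 1 where
  V : Type
  fintypeV : Fintype V
  G : SimpleGraph V

attribute [instance] FinGraph.fintypeV

def FinGraph.of {V : Type} [h : Fintype V] (G : SimpleGraph V) : FinGraph := ⟨V, h, G⟩

noncomputable def FinGraph.density (G : FinGraph) (U : Kernel) : ℝ := homDensity G.G U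

/-- Number of edges of a bundled finite graph. -/
noncomputable def FinGraph.edges (G : FinGraph) : ℕ := G.G.edgeSet.ncard

instance finiteSubgraph {V : Type} [Finite V] (G : SimpleGraph V) : Finite G.Subgraph := by
  classical
  exact Finite.of_injective (fun G' => (G'.verts, G'.Adj))
    (fun a b h => SimpleGraph.Subgraph.ext (congrArg Prod.fst h) (congrArg Prod.snd h))

open Classical in
/-- The multiset of all subgraphs of `G` having exactly `l` edges. -/
noncomputable def FinGraph.subs (G : FinGraph) (l : ℕ) : Multiset FinGraph :=
  ((Set.toFinite {G' : G.G.Subgraph | G'.edgeSet.ncard = l}).toFinset.val).map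
    fun G' => FinGraph.of G'.coe

/-- `D` is an `l`-deck: a multiset of graphs each with exactly `l` edges. -/
def IsDeck (D : Multiset FinGraph) (l : ℕ) : Prop := ∀ G ∈ D, G.edges = l

/-- The `l`-deck of a deck `D`: all `l`-edge subgraphs of the graphs of `D`. -/
noncomputable def subDeck (D : Multiset FinGraph) (l : ℕ) : Multiset FinGraph :=
  D.bind fun G => G.subs l

/-- `s_D(H)`: the number of subgraphs isomorphic to `H` of the graphs in `D`. -/
noncomputable def sD (D : Multiset FinGraph) (H : FinGraph) : ℕ :=
  (D.map fun G => Set.ncard {G' : G.G.Subgraph | Nonempty (G'.coe ≃g H.G)}).sum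

/-- The coefficient `c^D_{U,l} = Σ_{G ∈ D} Σ_{H' ∈ G[l]} t(H', U)`. -/
noncomputable def coeff (D : Multiset FinGraph) (U : Kernel) (l : ℕ) : ℝ :=
  ((subDeck D l).map fun H => H.density U).sum

/-- All the coefficients `c^D_{U,2}, c^D_{U,4}, …, c^D_{U,l}` vanish. -/
def AllCoeffZero (D : Multiset FinGraph) (U : Kernel) (l : ℕ) : Prop :=
  ∀ k, Even k → 0 < k → k ≤ l → coeff D U k = 0

/-- Among `c^D_{U,2}, c^D_{U,4}, …, c^D_{U,l}` not all vanish and the first nonzero one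
is positive. -/
def FirstNonzeroPos (D : Multiset FinGraph) (U : Kernel) (l : ℕ) : Prop :=
  ∃ k, Even k ∧ 0 < k ∧ k ≤ l ∧ 0 < coeff D U k ∧
    ∀ j, Even j → 0 < j → j < k → coeff D U j = 0

/-- Among `c^D_{U,2}, c^D_{U,4}, …, c^D_{U,l}` not all vanish and the first nonzero one
is negative. -/
def FirstNonzeroNeg (D : Multiset FinGraph) (U : Kernel) (l : ℕ) : Prop :=
  ∃ k, Even k ∧ 0 < k ∧ k ≤ l ∧ coeff D U k < 0 ∧
    ∀ j, Even j → 0 < j → j < k → coeff D U j = 0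

def ClassI (D : Multiset FinGraph) (l : ℕ) : Prop :=
  ∀ U : Kernel, U.Nonzero → FirstNonzeroPos D U l

def ClassII (D : Multiset FinGraph) (l : ℕ) : Prop :=
  ∃ U : Kernel, FirstNonzeroNeg D U l

def ClassIII (D : Multiset FinGraph) (l : ℕ) : Prop :=
  (∃ U : Kernel, U.Nonzero ∧ AllCoeffZero D U l) ∧
  ∀ U : Kernel, AllCoeffZero D U l ∨ FirstNonzeroPos D U l

/-- The cycle `C_n` as a bundled graph. -/
def cycleF (n : ℕ) : FinGraph := FinGraph.of (SimpleGraph.cycleGraph n)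

/-- The path `P_n` with `n` edges as a bundled graph. -/
def pathF (n : ℕ) : FinGraph := FinGraph.of (SimpleGraph.pathGraph (n+1))

/-- Gluing two graphs by identifying the vertex `v` of `G` with the vertex `w` of `H`. -/
def glue {V W : Type} (G : SimpleGraph V) (H : SimpleGraph W) (v : V) (w : W) :
    SimpleGraph (V ⊕ {x : W // x ≠ w}) where
  Adj a b :=
    Sum.elim (fun a => Sum.elim (fun b => G.Adj a b) (fun b => a = v ∧ H.Adj w b.1) b)
             (fun a => Sum.elim (fun b => b = v ∧ H.Adj w a.1) (fun b => H.Adj a.1 b.1) b) a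
  symm := by
    constructor
    rintro (a | a) (b | b) h
    · exact h.symm
    · exact h
    · exact h
    · exact h.symm
  loopless := by
    constructor
    rintro (a | a) h
    · exact G.loopless.irrefl a h
    · exact H.loopless.irrefl a.1 h

/-- Disjoint union of two simple graphs. -/
def disjSum {V W : Type} (G : SimpleGraph V) (H : SimpleGraph W) : SimpleGraph (V ⊕ W) where
  Adj a b :=
    Sum.elim (fun a => Sum.elim (fun b => G.Adj a b) (fun _ => False) b)
             (fun a => Sum.elim (fun _ => False) (fun b => H.Adj a b) b) a
  symm := by
    constructor
    rintro (a | a) (b | b) h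
    · exact h.symm
    · exact h.elim
    · exact h.elim
    · exact h.symm
  loopless := by
    constructor
    rintro (a | a) h
    · exact G.loopless.irrefl a h
    · exact H.loopless.irrefl a h

/-- Disjoint union `G ∪ H` of bundled graphs. -/
noncomputable def FinGraph.disjU (G H : FinGraph) : FinGraph := FinGraph.of (disjSum G.G H.G)

open Classical in
/-- `C_k ⊕ P_n ⊕ C_l`: two cycles joined by a path with `n` edges; for `n = 0` this is
`C_k ⊕ C_l`, two cycles sharing one vertex. (Junk value if `k = 0` or `l = 0`.) -/
noncomputable def cpcF (k n l : ℕ) : FinGraph :=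
  if h : 0 < k ∧ 0 < l then
    let A := glue (SimpleGraph.cycleGraph k) (SimpleGraph.pathGraph (n+1)) ⟨0, h.1⟩ 0
    let ep : Fin k ⊕ {x : Fin (n+1) // x ≠ 0} :=
      if hn : n = 0 then Sum.inl ⟨0, h.1⟩
      else Sum.inr ⟨Fin.last n, fun hc => hn (by simpa using congrArg Fin.val hc)⟩
    FinGraph.of (glue A (SimpleGraph.cycleGraph l) ep ⟨0, h.2⟩)
  else FinGraph.of (⊥ : SimpleGraph (Fin 0))

/-! For odd `x`, the three reals `1, 1, -2^{1/x}` have odd power sums `2 - 2^{l/x}`, which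
vanish exactly at `l = x`. Power sums are multiplicative under products of families, so the
product of these families over `x ∈ [1, k] \ {k₀}` has vanishing odd power sums up to `k`,
except the `k₀`-th one `c`. Taking `N` copies of it scaled by `±(N |c|)^{-1/k₀}` makes the
`k₀`-th power sum `1`, while the `(k+1)`-th one is `O(N^{-(k+1-k₀)/k₀})`. -/

open Filter Topology

section PowerSum

variable {ι κ : Type*} [Fintype ι] [Fintype κ]

def powerSum (ω : ι → ℝ) (l : ℕ) : ℝ := ∑ i, ω i ^ l

theorem powerSum_comp_equiv (ω : ι → ℝ) (e : κ ≃ ι) (l : ℕ) :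
    powerSum (ω ∘ e) l = powerSum ω l :=
  e.sum_comp fun i => ω i ^ l

theorem powerSum_const_mul (t : ℝ) (ω : ι → ℝ) (l : ℕ) :
    powerSum (fun i => t * ω i) l = t ^ l * powerSum ω l := by
  simp only [powerSum, mul_pow, Finset.mul_sum]

theorem powerSum_comp_snd (N : ℕ) (ω : ι → ℝ) (l : ℕ) :
    powerSum (fun p : Fin N × ι => ω p.2) l = N * powerSum ω l := by
  simp [powerSum, Fintype.sum_prod_type]

theorem powerSum_pi_prod {α : Type*} [Fintype α] [DecidableEq α] {ι : α → Type*}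
    [∀ a, Fintype (ι a)] (ω : ∀ a, ι a → ℝ) (l : ℕ) :
    powerSum (fun f : ∀ a, ι a => ∏ a, ω a (f a)) l = ∏ a, powerSum (ω a) l := by
  simp only [powerSum, ← Finset.prod_pow, Fintype.prod_sum]

theorem exists_fin_powerSum_eq (ω : ι → ℝ) :
    ∃ (m : ℕ) (η : Fin m → ℝ), ∀ l, powerSum η l = powerSum ω l :=
  ⟨_, ω ∘ (Fintype.equivFin ι).symm, powerSum_comp_equiv ω _⟩

end PowerSum

theorem exists_powerSum_eq_one_of_ne_zero {ι : Type*} [Fintype ι] (ω : ι → ℝ) {k₀ n : ℕ}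
    (hk₀ : Odd k₀) (hn : k₀ < n) (hc : powerSum ω k₀ ≠ 0) {δ : ℝ} (hδ : 0 < δ) :
    ∃ (m : ℕ) (η : Fin m → ℝ), (∀ l, powerSum ω l = 0 → powerSum η l = 0) ∧
      powerSum η k₀ = 1 ∧ |powerSum η n| ≤ δ := by
  set c := powerSum ω k₀
  have hc_pos : 0 < |c| := abs_pos.mpr hc
  have hk₀0 : k₀ ≠ 0 := by rintro rfl; simp at hk₀
  obtain ⟨σ, hσ, hσ_pow, hσc⟩ : ∃ σ : ℝ, |σ| = 1 ∧ σ ^ k₀ = σ ∧ σ * c = |c| := by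
    rcases abs_choice c with h | h
    · exact ⟨1, by simp, by simp, by simp [h]⟩
    · exact ⟨-1, by simp, hk₀.neg_one_pow, by simp [h]⟩
  set scale : ℕ → ℝ := fun N => ((N : ℝ) * |c|) ^ (-(k₀ : ℝ)⁻¹)
  have hscale_pow (N : ℕ) (hN : 0 < N) : scale N ^ k₀ = ((N : ℝ) * |c|)⁻¹ := by
    simp only [scale]
    rw [Real.rpow_neg (by positivity), inv_pow, Real.rpow_inv_natCast_pow (by positivity) hk₀0]
  have hscale : Tendsto scale atTop (𝓝 0) :=
    (tendsto_rpow_neg_atTop (by positivity)).comp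
      (tendsto_natCast_atTop_atTop.atTop_mul_const hc_pos)
  have hsmall : ∀ᶠ N in atTop, scale N ^ (n - k₀) * (|powerSum ω n| / |c|) ≤ δ := by
    have h := (hscale.pow (n - k₀)).mul_const (|powerSum ω n| / |c|)
    rw [zero_pow (by omega), zero_mul] at h
    exact h.eventually (ge_mem_nhds hδ)
  obtain ⟨N, hN, hNδ⟩ := ((eventually_gt_atTop 0).and hsmall).exists
  have hη (l : ℕ) : powerSum (fun p : Fin N × ι => σ * scale N * ω p.2) l
      = N * (σ * scale N) ^ l * powerSum ω l := by
    rw [powerSum_comp_snd N (fun i => σ * scale N * ω i), powerSum_const_mul, mul_assoc]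
  obtain ⟨m, η, hη_eq⟩ := exists_fin_powerSum_eq fun p : Fin N × ι => σ * scale N * ω p.2
  refine ⟨m, η, fun l hl => by rw [hη_eq, hη, hl, mul_zero], ?_, ?_⟩
  · rw [hη_eq, hη, mul_pow, hσ_pow, hscale_pow N hN]
    field_simp
    linear_combination hσc
  · have hs : 0 ≤ scale N := Real.rpow_nonneg (by positivity) _
    rw [hη_eq, hη, abs_mul, abs_mul, abs_pow, abs_mul, hσ, one_mul, abs_of_nonneg hs,
      Nat.abs_cast, ← pow_sub_mul_pow (scale N) hn.le, hscale_pow N hN]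
    calc (N : ℝ) * (scale N ^ (n - k₀) * ((N : ℝ) * |c|)⁻¹) * |powerSum ω n|
        = scale N ^ (n - k₀) * (|powerSum ω n| / |c|) := by field_simp
      _ ≤ δ := hNδ

noncomputable def oddGadget (x : ℕ) : Fin 3 → ℝ := ![1, 1, -(2 : ℝ) ^ (x : ℝ)⁻¹]

theorem powerSum_oddGadget_eq_zero_iff {x l : ℕ} (hx : x ≠ 0) (hl : Odd l) :
    powerSum (oddGadget x) l = 0 ↔ l = x := by
  have hx' : (x : ℝ) ≠ 0 := Nat.cast_ne_zero.mpr hx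
  have h : powerSum (oddGadget x) l = 2 - (2 : ℝ) ^ ((l : ℝ) / x) := by
    rw [powerSum, Fin.sum_univ_three]
    simp only [oddGadget, Matrix.cons_val, one_pow, hl.neg_pow, ← Real.rpow_natCast,
      ← Real.rpow_mul zero_le_two]
    ring_nf
  conv_lhs => rw [h, sub_eq_zero, eq_comm]; rhs; rw [← Real.rpow_one 2]
  rw [Real.rpow_right_inj zero_lt_two (by norm_num), div_eq_one_iff_eq hx', Nat.cast_inj]

noncomputable def oddGadgetProd (S : Finset ℕ) : (S → Fin 3) → ℝ :=
  fun f => ∏ x : S, oddGadget x (f x)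

theorem powerSum_oddGadgetProd (S : Finset ℕ) (l : ℕ) :
    powerSum (oddGadgetProd S) l = ∏ x : S, powerSum (oddGadget x) l :=
  powerSum_pi_prod _ l

theorem powerSum_oddGadgetProd_eq_zero_iff {S : Finset ℕ} (hS : 0 ∉ S) {l : ℕ} (hl : Odd l) :
    powerSum (oddGadgetProd S) l = 0 ↔ l ∈ S := by
  rw [powerSum_oddGadgetProd, Finset.prod_eq_zero_iff]
  constructor
  · rintro ⟨x, -, hx⟩
    rw [powerSum_oddGadget_eq_zero_iff (ne_of_mem_of_not_mem x.2 hS) hl] at hx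
    exact hx ▸ x.2
  · intro h
    exact ⟨⟨l, h⟩, Finset.mem_univ _,
      (powerSum_oddGadget_eq_zero_iff (ne_of_mem_of_not_mem h hS) hl).2 rfl⟩

theorem sums_of_powers_small_general (k₀ k : ℕ) (hk₀ : Odd k₀)
    (hle : k₀ ≤ k) (δ : ℝ) (hδ : 0 < δ) :
    ∃ (m : ℕ) (ω : Fin m → ℝ),
      (∀ l : ℕ, Odd l → l ≠ k₀ → 3 ≤ l → l ≤ k → ∑ i, ω i ^ l = 0) ∧
      (∑ i, ω i ^ k₀ = 1) ∧
      (∑ i, ω i ^ (k+1) ≤ δ) := by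
  set S := (Finset.Icc 1 k).erase k₀
  have hzero {l : ℕ} (hl : Odd l) : powerSum (oddGadgetProd S) l = 0 ↔ l ∈ S :=
    powerSum_oddGadgetProd_eq_zero_iff (by simp [S]) hl
  obtain ⟨m, η, hη_zero, hη_one, hη_small⟩ :=
    exists_powerSum_eq_one_of_ne_zero (oddGadgetProd S) hk₀ (Nat.lt_succ_of_le hle)
      (by simp [hzero hk₀, S]) hδ
  refine ⟨m, η, fun l hl hne h3 hlk => hη_zero l ((hzero hl).2 ?_), hη_one,
    (le_abs_self _).trans hη_small⟩
  simp only [S, Finset.mem_erase, Finset.mem_Icc]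
  omega

/-- For every pair of odd integers `k₀`, `k` with `3 ≤ k₀ ≤ k` and every `δ > 0`,
there exist `m` and reals `ω₁, …, ω_m` whose `ℓ`-th power sums vanish for every odd `ℓ ≠ k₀`
with `3 ≤ ℓ ≤ k`, whose `k₀`-th power sum is `1`, and whose `(k+1)`-th power sum is at
most `δ`. -/
theorem sums_of_powers_small (k₀ k : ℕ) (hk₀ : Odd k₀) (hk : Odd k)
    (h3 : 3 ≤ k₀) (hle : k₀ ≤ k) (δ : ℝ) (hδ : 0 < δ) :
    ∃ (m : ℕ) (ω : Fin m → ℝ),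
      (∀ l : ℕ, Odd l → l ≠ k₀ → 3 ≤ l → l ≤ k → ∑ i, ω i ^ l = 0) ∧
      (∑ i, ω i ^ k₀ = 1) ∧
      (∑ i, ω i ^ (k+1) ≤ δ) :=
  sums_of_powers_small_general k₀ k hk₀ hle δ hδ
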